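/- arXiv:1803.01075 — 2 statements merged into one kernel-verified Lean document; each statement's English description precedes it below -/
import Mathlib

section
/- Let Q be a unital involutive quantale and X a Hilbert Q-module. If 𝒮 ⊆ X is a set of regular Hilbert sections which is join-dense in X (every element of X is a join of elements of 𝒮), then 𝒮 is a Hilbert basis of X. -/
/-- A unital involutive quantale: a complete lattice with an associative
multiplication preserving arbitrary joins in each variable, a unit `e`, and a
join-preserving involution. -/
structure QuantaleStr (Q : Type*) [CompleteLattice Q] where
  mul : Q → Q → Q
  e : Q
  star : Q → Q
  mul_assoc : ∀ a b c, mul (mul a b) c = mul a (mul b c)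
  sSup_mul : ∀ (S : Set Q) (b : Q), mul (sSup S) b = ⨆ a ∈ S, mul a b
  mul_sSup : ∀ (a : Q) (S : Set Q), mul a (sSup S) = ⨆ b ∈ S, mul a b
  e_mul : ∀ a, mul e a = a
  mul_e : ∀ a, mul a e = a
  star_star : ∀ a, star (star a) = a
  star_mul : ∀ a b, star (mul a b) = mul (star b) (star a)
  star_sSup : ∀ S : Set Q, star (sSup S) = ⨆ a ∈ S, star a

/-- The set of partial units of a quantale. -/
def QuantaleStr.PU {Q : Type*} [CompleteLattice Q] (Qs : QuantaleStr Q) : Set Q :=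
  {s | Qs.mul s (Qs.star s) ≤ Qs.e ∧ Qs.mul (Qs.star s) s ≤ Qs.e}

/-- An inverse quantal frame: a unital involutive quantale which is a frame,
has a stable support, and whose partial units join to the top. -/
structure InverseQuantalFrame (Q : Type*) [Order.Frame Q] extends QuantaleStr Q where
  supp : Q → Q
  supp_le_e : ∀ a, supp a ≤ e
  supp_sSup : ∀ S : Set Q, supp (sSup S) = ⨆ a ∈ S, supp a
  supp_le_mul_star : ∀ a, supp a ≤ mul a (star a)
  le_supp_mul : ∀ a, a ≤ mul (supp a) a
  supp_stable : ∀ b a, b ≤ e → supp (mul b a) = mul b (supp a)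
  sSup_PU : sSup {s | mul s (star s) ≤ e ∧ mul (star s) s ≤ e} = ⊤

/-- A left module over a quantale: a complete lattice with a unital associative
action preserving arbitrary joins in each variable. -/
structure QuantaleModule {Q : Type*} [CompleteLattice Q] (Qs : QuantaleStr Q)
    (X : Type*) [CompleteLattice X] where
  act : Q → X → X
  act_mul : ∀ a b x, act (Qs.mul a b) x = act a (act b x)
  act_e : ∀ x, act Qs.e x = x
  sSup_act : ∀ (S : Set Q) (x : X), act (sSup S) x = ⨆ a ∈ S, act a x
  act_sSup : ∀ (a : Q) (S : Set X), act a (sSup S) = ⨆ x ∈ S, act a x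

/-- A pre-Hilbert module over a quantale. -/
structure PreHilbertModule {Q : Type*} [CompleteLattice Q] (Qs : QuantaleStr Q)
    (X : Type*) [CompleteLattice X] extends QuantaleModule Qs X where
  inner : X → X → Q
  inner_act : ∀ a x y, inner (act a x) y = Qs.mul a (inner x y)
  sSup_inner : ∀ (S : Set X) (y : X), inner (sSup S) y = ⨆ x ∈ S, inner x y
  inner_star : ∀ x y, inner x y = Qs.star (inner y x)

namespace PreHilbertModule

variable {Q X : Type*} [CompleteLattice Q] [CompleteLattice X] {Qs : QuantaleStr Q}

/-- A Hilbert section: `⟨x,s⟩s ≤ x` for all `x`. -/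
def IsHilbertSection (H : PreHilbertModule Qs X) (s : X) : Prop :=
  ∀ x, H.act (H.inner x s) s ≤ x

/-- A regular element: `⟨s,s⟩s = s`. -/
def IsRegularSection (H : PreHilbertModule Qs X) (s : X) : Prop :=
  H.act (H.inner s s) s = s

/-- A Hilbert basis: `x = ⋁_{t ∈ S} ⟨x,t⟩t` for all `x`. -/
def IsHilbertBasis (H : PreHilbertModule Qs X) (S : Set X) : Prop :=
  ∀ x, x = ⨆ t ∈ S, H.act (H.inner x t) t

/-- Non-degeneracy of the inner product. -/
def Nondegenerate (H : PreHilbertModule Qs X) : Prop :=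
  ∀ x y, (∀ z, H.inner x z = H.inner y z) → x = y

end PreHilbertModule

/-- A `Q`-locale over an inverse quantal frame: a module which is a frame and
satisfies the anchor condition. -/
structure QLocale {Q : Type*} [Order.Frame Q] (Qf : InverseQuantalFrame Q)
    (X : Type*) [Order.Frame X] extends QuantaleModule Qf.toQuantaleStr X where
  anchor : ∀ b x, b ≤ Qf.e → act b x = act b ⊤ ⊓ x

/-- A `Q`-sheaf over an inverse quantal frame: a pre-Hilbert module which is a
frame, satisfies the anchor condition, and has a Hilbert basis. -/
structure QSheaf {Q : Type*} [Order.Frame Q] (Qf : InverseQuantalFrame Q)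
    (X : Type*) [Order.Frame X] extends PreHilbertModule Qf.toQuantaleStr X where
  anchor : ∀ b x, b ≤ Qf.e → act b x = act b ⊤ ⊓ x
  hasBasis : ∃ S : Set X, ∀ x, x = ⨆ t ∈ S, act (inner x t) t

namespace QSheaf

variable {Q X : Type*} [Order.Frame Q] [Order.Frame X] {Qf : InverseQuantalFrame Q}

/-- The support `ς_X(x) = ⟨x,x⟩ ∧ e` of a `Q`-sheaf. -/
def sppX (H : QSheaf Qf X) (x : X) : Q := H.inner x x ⊓ Qf.e

/-- A local section: `ς_X(x)s = x` for all `x ≤ s`. -/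
def IsLocalSection (H : QSheaf Qf X) (s : X) : Prop :=
  ∀ x ≤ s, H.act (H.sppX x) s = x

/-- A principal section: a local section with `⟨s,s⟩ ≤ e`. -/
def IsPrincipalSection (H : QSheaf Qf X) (s : X) : Prop :=
  H.IsLocalSection s ∧ H.inner s s ≤ Qf.e

/-- A right local section: `x = s ∧ 1_Q·x` for all `x ≤ s`. -/
def IsRightLocalSection (H : QSheaf Qf X) (s : X) : Prop :=
  ∀ x ≤ s, x = s ⊓ H.act ⊤ x

/-- A local bisection: simultaneously a local section and a right local section. -/
def IsBisection (H : QSheaf Qf X) (s : X) : Prop :=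
  H.IsLocalSection s ∧ H.IsRightLocalSection s

end QSheaf

namespace QuantaleModule

variable {Q X : Type*} [CompleteLattice Q] [CompleteLattice X] {Qs : QuantaleStr Q}

theorem act_sup_left (M : QuantaleModule Qs X) (a b : Q) (x : X) :
    M.act (a ⊔ b) x = M.act a x ⊔ M.act b x := by
  rw [← sSup_pair, M.sSup_act, iSup_pair]

theorem act_mono_left (M : QuantaleModule Qs X) {a b : Q} (hab : a ≤ b) (x : X) :
    M.act a x ≤ M.act b x := by
  rw [← sup_eq_right.mpr hab, M.act_sup_left]
  exact le_sup_left

end QuantaleModule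

namespace PreHilbertModule

variable {Q X : Type*} [CompleteLattice Q] [CompleteLattice X] {Qs : QuantaleStr Q}

theorem inner_sup_left (H : PreHilbertModule Qs X) (x y z : X) :
    H.inner (x ⊔ y) z = H.inner x z ⊔ H.inner y z := by
  rw [← sSup_pair, H.sSup_inner, iSup_pair]

theorem inner_mono_left (H : PreHilbertModule Qs X) {x y : X} (hxy : x ≤ y) (z : X) :
    H.inner x z ≤ H.inner y z := by
  rw [← sup_eq_right.mpr hxy, H.inner_sup_left]
  exact le_sup_left

theorem iSup_act_inner_le_of_isHilbertSection (H : PreHilbertModule Qs X) {S : Set X}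
    (hsec : ∀ s ∈ S, H.IsHilbertSection s) (x : X) :
    ⨆ s ∈ S, H.act (H.inner x s) s ≤ x :=
  iSup₂_le fun s hs => hsec s hs x

theorem IsRegularSection.le_act_inner {H : PreHilbertModule Qs X} {s x : X}
    (hreg : H.IsRegularSection s) (hsx : s ≤ x) :
    s ≤ H.act (H.inner x s) s :=
  calc s = H.act (H.inner s s) s := hreg.symm
    _ ≤ H.act (H.inner x s) s := H.toQuantaleModule.act_mono_left (H.inner_mono_left hsx s) s

theorem le_iSup_act_inner_of_regular (H : PreHilbertModule Qs X) {S : Set X}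
    (hreg : ∀ s ∈ S, H.IsRegularSection s) {T : Set X} (hTS : T ⊆ S) :
    sSup T ≤ ⨆ s ∈ S, H.act (H.inner (sSup T) s) s :=
  sSup_le fun t ht =>
    ((hreg t (hTS ht)).le_act_inner (le_sSup ht)).trans
      (le_biSup (fun s => H.act (H.inner (sSup T) s) s) (hTS ht))

end PreHilbertModule

theorem stmt0_general {Q X : Type*} [CompleteLattice Q] [CompleteLattice X]
    {Qs : QuantaleStr Q} (H : PreHilbertModule Qs X)
    (S : Set X)
    (hsec : ∀ s ∈ S, H.IsHilbertSection s)
    (hreg : ∀ s ∈ S, H.IsRegularSection s)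
    (hdense : ∀ x : X, ∃ T ⊆ S, x = sSup T) :
    H.IsHilbertBasis S := by
  intro x
  obtain ⟨T, hTS, rfl⟩ := hdense x
  exact le_antisymm (H.le_iSup_act_inner_of_regular hreg hTS)
    (H.iSup_act_inner_le_of_isHilbertSection hsec _)

/-- In a Hilbert `Q`-module, any join-dense set of regular Hilbert
sections is a Hilbert basis. -/
theorem stmt0 {Q X : Type*} [CompleteLattice Q] [CompleteLattice X]
    {Qs : QuantaleStr Q} (H : PreHilbertModule Qs X)
    (hnd : H.Nondegenerate)
    (S : Set X)
    (hsec : ∀ s ∈ S, H.IsHilbertSection s)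
    (hreg : ∀ s ∈ S, H.IsRegularSection s)
    (hdense : ∀ x : X, ∃ T ⊆ S, x = sSup T) :
    H.IsHilbertBasis S :=
  stmt0_general H S hsec hreg hdense
end

section
/- Let B be a frame and X a B-sheaf. For every B-module M and every map h : 𝒮_X → M which is B-equivariant (h(bs) = b·h(s) for all b ∈ B and s ∈ 𝒮_X; note that bs ∈ 𝒮_X) and preserves joins of compatible sets of local sections (h(⋁Z) = ⋁_{s∈Z} h(s) for every compatible Z ⊆ 𝒮_X), there exists a unique homomorphism of B-modules h♯ : X → M (a join-preserving B-equivariant map) extending h. -/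
/-!
Every element of a `B`-sheaf is the join of the local sections below it, so a join-preserving
extension of `h` is forced to be `x ↦ ⋁ {h t | t ≤ x a local section}`. This formula does define
a homomorphism because any family of elements below one local section `s` is compatible
(`σ(u)v = σ(u)σ(v)s = σ(v)u`), so `h` preserves its join; and a local section below `b·x` is
fixed by `b`, by the anchor condition `b·y = (b·1) ∧ y`.
-/

namespace BSheaf

section Sections

variable {B X : Type*}

def IsLocalSection [LE X] (act : B → X → X) (σ : X → B) (s : X) : Prop :=
  ∀ x ≤ s, act (σ x) s = x

def sectionsBelow [LE X] (act : B → X → X) (σ : X → B) (x : X) : Set X :=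
  {t | IsLocalSection act σ t ∧ t ≤ x}

variable {act : B → X → X} {σ : X → B}

theorem IsLocalSection.compatible [LE X] [SemilatticeInf B]
    (act_inf : ∀ a b x, act (a ⊓ b) x = act a (act b x)) {s u v : X}
    (hs : IsLocalSection act σ s) (hu : u ≤ s) (hv : v ≤ s) :
    act (σ u) v = act (σ v) u := by
  calc act (σ u) v = act (σ u) (act (σ v) s) := by rw [hs v hv]
    _ = act (σ v) (act (σ u) s) := by rw [← act_inf, inf_comm, act_inf]
    _ = act (σ v) u := by rw [hs u hu]

variable [SemilatticeInf X] [OrderTop X]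

theorem act_le_self (anchor : ∀ b x, act b x = act b ⊤ ⊓ x) (b : B) (x : X) :
    act b x ≤ x := by
  rw [anchor]
  exact inf_le_right

theorem act_mono_right (anchor : ∀ b x, act b x = act b ⊤ ⊓ x) (b : B) {x y : X}
    (hxy : x ≤ y) : act b x ≤ act b y := by
  rw [anchor b x, anchor b y]
  exact inf_le_inf_left _ hxy

theorem act_eq_self_of_le_act (anchor : ∀ b x, act b x = act b ⊤ ⊓ x) {b : B} {x y : X}
    (hy : y ≤ act b x) : act b y = y :=
  (act_le_self anchor b y).antisymm <| by
    rw [anchor]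
    exact le_inf (hy.trans (act_mono_right anchor b le_top)) le_rfl

theorem IsLocalSection.of_le (anchor : ∀ b x, act b x = act b ⊤ ⊓ x)
    (σ_supp : ∀ x, act (σ x) x = x) {s t : X} (hs : IsLocalSection act σ s) (hts : t ≤ s) :
    IsLocalSection act σ t := by
  intro x hxt
  apply le_antisymm
  · calc act (σ x) t ≤ act (σ x) s := act_mono_right anchor _ hts
      _ = x := hs x (hxt.trans hts)
  · calc x = act (σ x) x := (σ_supp x).symm
      _ ≤ act (σ x) t := act_mono_right anchor _ hxt

end Sections

variable {B X M : Type*} [Order.Frame X] [CompleteLattice M]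
  {act : B → X → X} {σ : X → B}

theorem sSup_sectionsBelow (anchor : ∀ b x, act b x = act b ⊤ ⊓ x)
    (σ_supp : ∀ x, act (σ x) x = x) (hcov : sSup {s : X | IsLocalSection act σ s} = ⊤)
    (x : X) : sSup (sectionsBelow act σ x) = x := by
  refine le_antisymm (sSup_le fun t ht => ht.2) ?_
  calc x = ⨆ s ∈ {s : X | IsLocalSection act σ s}, x ⊓ s := by
        rw [← inf_sSup_eq, hcov, inf_top_eq]
    _ ≤ sSup (sectionsBelow act σ x) :=
        iSup₂_le fun s hs => le_sSup ⟨hs.of_le anchor σ_supp inf_le_right, inf_le_left⟩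

theorem sSup_sectionsBelow_of_isLocalSection {s : X} (hs : IsLocalSection act σ s) :
    sSup (sectionsBelow act σ s) = s :=
  le_antisymm (sSup_le fun _ ht => ht.2) (le_sSup ⟨hs, le_rfl⟩)

def extension (act : B → X → X) (σ : X → B) (h : X → M) (x : X) : M :=
  ⨆ t ∈ sectionsBelow act σ x, h t

theorem le_extension (h : X → M) {t x : X} (ht : IsLocalSection act σ t) (htx : t ≤ x) :
    h t ≤ extension act σ h x :=
  le_iSup₂_of_le t ⟨ht, htx⟩ le_rfl

theorem extension_mono (h : X → M) : Monotone (extension act σ h) := fun _ _ hxy =>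
  iSup₂_le fun _ ht => le_extension h ht.1 (ht.2.trans hxy)

section Joins

variable [SemilatticeInf B] (anchor : ∀ b x, act b x = act b ⊤ ⊓ x) (σ_supp : ∀ x, act (σ x) x = x)
  (act_inf : ∀ a b x, act (a ⊓ b) x = act a (act b x)) {h : X → M}
  (h_joins : ∀ Z : Set X, (∀ s ∈ Z, IsLocalSection act σ s) →
    (∀ s ∈ Z, ∀ t ∈ Z, act (σ s) t = act (σ t) s) → h (sSup Z) = ⨆ s ∈ Z, h s)
include anchor σ_supp act_inf h_joins

theorem map_sSup_of_forall_le {s : X} (hs : IsLocalSection act σ s) {Z : Set X}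
    (hZ : ∀ z ∈ Z, z ≤ s) : h (sSup Z) = ⨆ z ∈ Z, h z :=
  h_joins Z (fun z hz => hs.of_le anchor σ_supp (hZ z hz))
    fun u hu v hv => hs.compatible act_inf (hZ u hu) (hZ v hv)

theorem extension_eq_of_isLocalSection {s : X} (hs : IsLocalSection act σ s) :
    extension act σ h s = h s := by
  conv_rhs => rw [← sSup_sectionsBelow_of_isLocalSection hs]
  exact (map_sSup_of_forall_le anchor σ_supp act_inf h_joins hs fun _ ht => ht.2).symm

theorem extension_sSup (S : Set X) :
    extension act σ h (sSup S) = ⨆ x ∈ S, extension act σ h x := by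
  refine le_antisymm (iSup₂_le fun t ⟨ht, htS⟩ => ?_)
    (iSup₂_le fun x hx => extension_mono h (le_sSup hx))
  have ht_eq : sSup ((t ⊓ ·) '' S) = t := by
    rw [sSup_image, ← inf_sSup_eq, inf_eq_left.mpr htS]
  calc h t = ⨆ z ∈ (t ⊓ ·) '' S, h z := by
        conv_lhs => rw [← ht_eq]
        exact map_sSup_of_forall_le anchor σ_supp act_inf h_joins ht
          (by rintro _ ⟨x, -, rfl⟩; exact inf_le_left)
    _ = ⨆ x ∈ S, h (t ⊓ x) := iSup_image ..
    _ ≤ ⨆ x ∈ S, extension act σ h x := iSup₂_mono fun x _ =>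
        le_extension h (ht.of_le anchor σ_supp inf_le_left) inf_le_right

end Joins

theorem extension_act (anchor : ∀ b x, act b x = act b ⊤ ⊓ x) (σ_supp : ∀ x, act (σ x) x = x)
    {actM : B → M → M} (actM_sSup : ∀ (a : B) (S : Set M), actM a (sSup S) = ⨆ m ∈ S, actM a m)
    {h : X → M} (h_equiv : ∀ b s, IsLocalSection act σ s → h (act b s) = actM b (h s))
    (b : B) (x : X) : extension act σ h (act b x) = actM b (extension act σ h x) := by
  have actM_iSup : actM b (extension act σ h x) = ⨆ t ∈ sectionsBelow act σ x, actM b (h t) := by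
    rw [extension, ← sSup_image, actM_sSup, iSup_image]
  rw [actM_iSup, extension]
  apply le_antisymm
  · refine iSup₂_le fun t ⟨ht, htx⟩ => ?_
    calc h t = h (act b t) := by rw [act_eq_self_of_le_act anchor htx]
      _ = actM b (h t) := h_equiv b t ht
      _ ≤ ⨆ t ∈ sectionsBelow act σ x, actM b (h t) :=
          le_iSup₂_of_le t ⟨ht, htx.trans (act_le_self anchor b x)⟩ le_rfl
  · refine iSup₂_le fun t ⟨ht, htx⟩ => ?_
    rw [← h_equiv b t ht]
    exact le_extension h (ht.of_le anchor σ_supp (act_le_self anchor b t))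
      (act_mono_right anchor b htx)

theorem eq_extension (anchor : ∀ b x, act b x = act b ⊤ ⊓ x) (σ_supp : ∀ x, act (σ x) x = x)
    (hcov : sSup {s : X | IsLocalSection act σ s} = ⊤) {h H : X → M}
    (H_sSup : ∀ S : Set X, H (sSup S) = ⨆ x ∈ S, H x)
    (H_eq : ∀ s, IsLocalSection act σ s → H s = h s) : H = extension act σ h := by
  funext x
  calc H x = H (sSup (sectionsBelow act σ x)) := by rw [sSup_sectionsBelow anchor σ_supp hcov]
    _ = extension act σ h x := (H_sSup _).trans (biSup_congr fun t ht => H_eq t ht.1)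

end BSheaf

open BSheaf in
theorem stmt6_general {B X M : Type*} [Order.Frame B] [Order.Frame X] [CompleteLattice M]
    -- X is a B-module:
    (act : B → X → X)
    (act_inf : ∀ a b x, act (a ⊓ b) x = act a (act b x))
    -- which is a B-locale:
    (anchor : ∀ b x, act b x = act b ⊤ ⊓ x)
    -- equipped with a support:
    (σ : X → B)
    (σ_supp : ∀ x, act (σ x) x = x)
    -- and X is a B-sheaf (the local sections cover):
    (hcov : sSup {s : X | ∀ x ≤ s, act (σ x) s = x} = ⊤)
    -- M is a B-module:
    (actM : B → M → M)
    (actM_sSup : ∀ (a : B) (S : Set M), actM a (sSup S) = ⨆ m ∈ S, actM a m)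
    -- h is a B-equivariant map on local sections preserving compatible joins:
    (h : X → M)
    (h_equiv : ∀ b s, (∀ x ≤ s, act (σ x) s = x) → h (act b s) = actM b (h s))
    (h_joins : ∀ Z : Set X, (∀ s ∈ Z, ∀ x ≤ s, act (σ x) s = x) →
        (∀ s ∈ Z, ∀ t ∈ Z, act (σ s) t = act (σ t) s) →
        h (sSup Z) = ⨆ s ∈ Z, h s) :
    ∃! H : X → M, (∀ S : Set X, H (sSup S) = ⨆ x ∈ S, H x) ∧
      (∀ b x, H (act b x) = actM b (H x)) ∧
      (∀ s, (∀ x ≤ s, act (σ x) s = x) → H s = h s) :=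
  ⟨extension act σ h,
    ⟨extension_sSup anchor σ_supp act_inf h_joins,
      extension_act anchor σ_supp actM_sSup h_equiv,
      fun _ hs => extension_eq_of_isLocalSection anchor σ_supp act_inf h_joins hs⟩,
    fun _ ⟨H_sSup, _, H_eq⟩ => eq_extension anchor σ_supp hcov H_sSup H_eq⟩

/-- Universal property of a `B`-sheaf over a frame `B`: every
`B`-equivariant map on local sections preserving joins of compatible sets
extends uniquely to a homomorphism of `B`-modules. Here `B` acts as a
commutative quantale via `⊓` with unit `⊤`. -/
theorem stmt6 {B X M : Type*} [Order.Frame B] [Order.Frame X] [CompleteLattice M]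
    -- X is a B-module:
    (act : B → X → X)
    (act_inf : ∀ a b x, act (a ⊓ b) x = act a (act b x))
    (act_top : ∀ x, act ⊤ x = x)
    (sSup_act : ∀ (S : Set B) (x : X), act (sSup S) x = ⨆ a ∈ S, act a x)
    (act_sSup : ∀ (a : B) (S : Set X), act a (sSup S) = ⨆ x ∈ S, act a x)
    -- which is a B-locale:
    (anchor : ∀ b x, act b x = act b ⊤ ⊓ x)
    -- equipped with a support:
    (σ : X → B) (σ_mono : Monotone σ)
    (σ_act : ∀ b x, σ (act b x) = b ⊓ σ x)
    (σ_supp : ∀ x, act (σ x) x = x)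
    -- and X is a B-sheaf (the local sections cover):
    (hcov : sSup {s : X | ∀ x ≤ s, act (σ x) s = x} = ⊤)
    -- M is a B-module:
    (actM : B → M → M)
    (actM_inf : ∀ a b m, actM (a ⊓ b) m = actM a (actM b m))
    (actM_top : ∀ m, actM ⊤ m = m)
    (sSup_actM : ∀ (S : Set B) (m : M), actM (sSup S) m = ⨆ a ∈ S, actM a m)
    (actM_sSup : ∀ (a : B) (S : Set M), actM a (sSup S) = ⨆ m ∈ S, actM a m)
    -- h is a B-equivariant map on local sections preserving compatible joins:
    (h : X → M)
    (h_equiv : ∀ b s, (∀ x ≤ s, act (σ x) s = x) → h (act b s) = actM b (h s))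
    (h_joins : ∀ Z : Set X, (∀ s ∈ Z, ∀ x ≤ s, act (σ x) s = x) →
        (∀ s ∈ Z, ∀ t ∈ Z, act (σ s) t = act (σ t) s) →
        h (sSup Z) = ⨆ s ∈ Z, h s) :
    ∃! H : X → M, (∀ S : Set X, H (sSup S) = ⨆ x ∈ S, H x) ∧
      (∀ b x, H (act b x) = actM b (H x)) ∧
      (∀ s, (∀ x ≤ s, act (σ x) s = x) → H s = h s) :=
  stmt6_general act act_inf anchor σ σ_supp hcov actM actM_sSup h h_equiv h_joins
end
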